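/- arXiv:2103.09076 — 5 statements merged into one kernel-verified Lean document; each statement's English description precedes it below -/
import Mathlib

section
/- Let κ ≥ 1 be a real number and let f : ℝ → ℝ be the filter function associated to κ. Then for every λ ∈ [0,1], one has |λ·f(λ)² − √λ/(4√κ)| ≤ 1/(4κ). -/
open Real

/-- The filter function associated to the parameter `κ`. -/
noncomputable def filterFun (κ : ℝ) : ℝ → ℝ := fun l =>
  if 1 < l then (1/2) * κ ^ (-(1/4 : ℝ))
  else if 1/κ ≤ l then (1/2) * κ ^ (-(1/4 : ℝ)) * l ^ (-(1/4 : ℝ))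
  else if 1/(2*κ) ≤ l then (1/2) * Real.sin ((π/2) * ((l - 1/(2*κ)) / (1/κ - 1/(2*κ))))
  else 0

theorem stmt0 (κ : ℝ) (hκ : 1 ≤ κ) (l : ℝ) (hl : l ∈ Set.Icc (0:ℝ) 1) :
    |l * (filterFun κ l)^2 - Real.sqrt l / (4 * Real.sqrt κ)| ≤ 1 / (4*κ) := by
  obtain ⟨hl0, hl1⟩ := hl
  have hκ0 : (0:ℝ) < κ := lt_of_lt_of_le one_pos hκ
  have hsκ : Real.sqrt κ * Real.sqrt κ = κ := Real.mul_self_sqrt hκ0.le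
  have hsκ0 : 0 < Real.sqrt κ := Real.sqrt_pos.mpr hκ0
  by_cases h : 1/κ ≤ l
  · -- middle branch, equality
    have hl0' : 0 < l := lt_of_lt_of_le (by positivity) h
    have key : l * (filterFun κ l)^2 = Real.sqrt l / (4 * Real.sqrt κ) := by
      rw [filterFun]
      simp only [if_neg (not_lt.mpr hl1), if_pos h]
      rw [Real.sqrt_eq_rpow, Real.sqrt_eq_rpow, mul_pow, mul_pow,
        ← Real.rpow_natCast (κ ^ (-(1/4:ℝ))) 2, ← Real.rpow_natCast (l ^ (-(1/4:ℝ))) 2,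
        ← Real.rpow_mul hκ0.le, ← Real.rpow_mul hl0]
      norm_num
      rw [Real.rpow_neg hκ0.le, Real.rpow_neg hl0]
      have hls : l ^ ((1:ℝ)/2) * l ^ ((1:ℝ)/2) = l := by
        rw [← Real.rpow_add hl0']; norm_num
      field_simp
      linear_combination (-1) * hls
    rw [key, sub_self, abs_zero]
    positivity
  · -- l < 1/κ : both terms are in [0, 1/(4κ)]
    push_neg at h
    have hf2 : (filterFun κ l)^2 ≤ 1/4 := by
      rw [filterFun]
      have h1 : ¬ (1:ℝ) < l := not_lt.mpr hl1
      simp only [if_neg h1, if_neg (not_le.mpr h)]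
      split
      · have := Real.neg_one_le_sin ((π/2) * ((l - 1/(2*κ)) / (1/κ - 1/(2*κ))))
        have := Real.sin_le_one ((π/2) * ((l - 1/(2*κ)) / (1/κ - 1/(2*κ))))
        nlinarith
      · norm_num
    have ha : l * (filterFun κ l)^2 ≤ 1/(4*κ) := by
      have : l * (filterFun κ l)^2 ≤ (1/κ) * (1/4) :=
        mul_le_mul h.le hf2 (sq_nonneg _) (by positivity)
      calc l * (filterFun κ l)^2 ≤ (1/κ) * (1/4) := this
        _ = 1/(4*κ) := by ring
    have ha0 : 0 ≤ l * (filterFun κ l)^2 := by positivity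
    have hb : Real.sqrt l / (4 * Real.sqrt κ) ≤ 1/(4*κ) := by
      have hsl : Real.sqrt l ≤ Real.sqrt (1/κ) := Real.sqrt_le_sqrt h.le
      have hs1κ : Real.sqrt (1/κ) = 1 / Real.sqrt κ := by
        rw [one_div, Real.sqrt_inv, one_div]
      rw [hs1κ] at hsl
      rw [div_le_div_iff₀ (by positivity) (by positivity)]
      calc Real.sqrt l * (4*κ) ≤ (1/Real.sqrt κ) * (4*κ) := by
            apply mul_le_mul_of_nonneg_right hsl (by positivity)
        _ = 1 * (4 * Real.sqrt κ) := by
            field_simp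
            nlinarith [hsκ]
    have hb0 : 0 ≤ Real.sqrt l / (4 * Real.sqrt κ) := by positivity
    rw [abs_sub_le_iff]
    constructor <;> linarith
end

section
/- Let κ ≥ 1 be a real number, f the filter function associated to κ, and let A be an N×N positive semidefinite complex matrix with ‖A‖ ≤ 1 (so all eigenvalues lie in [0,1]), with spectral decomposition A = Σ_j λ_j |u_j⟩⟨u_j| (λ_j the eigenvalues, {u_j} an orthonormal eigenbasis). Then the operator norm of Σ_j λ_j f(λ_j)² |u_j⟩⟨u_j| − (1/(4√κ))·√A is at most 1/(4κ), where √A denotes the positive semidefinite square root of A. -/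
open Real Matrix
open scoped Matrix.Norms.L2Operator ComplexOrder

/-- The square root of a positive semidefinite matrix (removed from Mathlib; old definition). -/
noncomputable def Matrix.PosSemidef.sqrt {n 𝕜 : Type*} [Fintype n] [DecidableEq n] [RCLike 𝕜]
    {A : Matrix n n 𝕜} (hA : A.PosSemidef) : Matrix n n 𝕜 :=
  (hA.1.eigenvectorUnitary : Matrix n n 𝕜) * diagonal ((↑) ∘ (√·) ∘ hA.1.eigenvalues) *
    (star (hA.1.eigenvectorUnitary : Matrix n n 𝕜))

/-! On `[1/κ, 1]` the filter is built so that `λ f(λ)² = √λ / (4√κ)` exactly; below `1/κ`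
both `λ f(λ)²` and `√λ / (4√κ)` lie in `[0, 1/(4κ)]` because `f² ≤ 1/4`. Both matrices are
diagonal in the same eigenbasis, so the norm of their difference is the largest deviation over the
eigenvalues, which `‖A‖ ≤ 1` confines to `[0, 1]`. -/

lemma rpow_neg_quarter_sq {x : ℝ} (hx : 0 ≤ x) : (x ^ (-(1/4 : ℝ))) ^ 2 = (√x)⁻¹ := by
  rw [← rpow_natCast, ← rpow_mul hx, sqrt_eq_rpow, ← rpow_neg hx]
  norm_num

lemma mul_filterFun_sq_of_one_div_le {κ l : ℝ} (hκ : 0 < κ) (hl : 1/κ ≤ l) (hl1 : l ≤ 1) :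
    l * filterFun κ l ^ 2 = 1 / (4 * √κ) * √l := by
  have hl0 : 0 < l := lt_of_lt_of_le (by positivity) hl
  have hsl : √l * √l = l := mul_self_sqrt hl0.le
  rw [filterFun, if_neg hl1.not_gt, if_pos hl, mul_pow, mul_pow, rpow_neg_quarter_sq hκ.le,
    rpow_neg_quarter_sq hl0.le]
  nth_rewrite 1 [← hsl]
  field_simp
  norm_num

lemma filterFun_sq_le_of_lt_one_div {κ l : ℝ} (hl : l < 1/κ) (hl1 : l ≤ 1) :
    filterFun κ l ^ 2 ≤ 1/4 := by
  rw [filterFun, if_neg hl1.not_gt, if_neg hl.not_ge]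
  split_ifs
  · nlinarith [neg_one_le_sin ((π/2) * ((l - 1/(2*κ)) / (1/κ - 1/(2*κ)))),
      sin_le_one ((π/2) * ((l - 1/(2*κ)) / (1/κ - 1/(2*κ))))]
  · norm_num

lemma abs_mul_filterFun_sq_sub_le {κ l : ℝ} (hκ : 0 < κ) (hl0 : 0 ≤ l) (hl1 : l ≤ 1) :
    |l * filterFun κ l ^ 2 - 1 / (4 * √κ) * √l| ≤ 1 / (4 * κ) := by
  rcases le_or_gt (1/κ) l with hl | hl
  · rw [mul_filterFun_sq_of_one_div_le hκ hl hl1, sub_self, abs_zero]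
    positivity
  have hfilter : l * filterFun κ l ^ 2 ≤ 1 / (4 * κ) :=
    calc l * filterFun κ l ^ 2 ≤ (1/κ) * (1/4) :=
          mul_le_mul hl.le (filterFun_sq_le_of_lt_one_div hl hl1) (sq_nonneg _) (by positivity)
      _ = 1 / (4 * κ) := by ring
  have hsqrt : 1 / (4 * √κ) * √l ≤ 1 / (4 * κ) :=
    calc 1 / (4 * √κ) * √l ≤ 1 / (4 * √κ) * (√κ)⁻¹ := by
          rw [← sqrt_inv, ← one_div]; gcongr
      _ = 1 / (4 * κ) := by
          field_simp
          exact (sq_sqrt hκ.le).symm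
  have : 0 ≤ l * filterFun κ l ^ 2 := by positivity
  have : 0 ≤ 1 / (4 * √κ) * √l := by positivity
  rw [abs_sub_le_iff]
  constructor <;> linarith

lemma Matrix.IsHermitian.abs_eigenvalues_le_l2_opNorm {n : Type*} [Fintype n] [DecidableEq n]
    {A : Matrix n n ℂ} (hA : A.IsHermitian) (i : n) : |hA.eigenvalues i| ≤ ‖A‖ := by
  have : Nonempty n := ⟨i⟩
  simpa using spectrum.norm_le_norm_of_mem
    (spectrum.algebraMap_mem ℂ (hA.eigenvalues_mem_spectrum_real i))

lemma Matrix.l2_opNorm_unitary_conj {n 𝕜 : Type*} [Fintype n] [DecidableEq n] [RCLike 𝕜]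
    {U : Matrix n n 𝕜} (hU : U ∈ unitary (Matrix n n 𝕜)) (B : Matrix n n 𝕜) :
    ‖U * B * star U‖ = ‖B‖ := by
  rw [CStarRing.norm_mul_mem_unitary _ (Unitary.star_mem hU), CStarRing.norm_mem_unitary_mul _ hU]

lemma Matrix.conj_diagonal_sub_smul {n 𝕜 : Type*} [Fintype n] [DecidableEq n] [RCLike 𝕜]
    (U : Matrix n n 𝕜) (v w : n → 𝕜) (c : ℝ) :
    U * diagonal v * star U - c • (U * diagonal w * star U) =
      U * diagonal (v - c • w) * star U := by
  have hdiag : diagonal (v - c • w) = diagonal v - c • diagonal w := by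
    rw [← diagonal_smul, diagonal_sub]
    rfl
  rw [hdiag, Matrix.mul_sub, Matrix.sub_mul, Matrix.mul_smul, Matrix.smul_mul]

theorem stmt1 {N : ℕ} (κ : ℝ) (hκ : 1 ≤ κ)
    (A : Matrix (Fin N) (Fin N) ℂ) (hA : A.PosSemidef) (hAnorm : ‖A‖ ≤ 1) :
    ‖(hA.1.eigenvectorUnitary : Matrix (Fin N) (Fin N) ℂ) *
        Matrix.diagonal (fun j =>
          ((hA.1.eigenvalues j * (filterFun κ (hA.1.eigenvalues j))^2 : ℝ) : ℂ)) *
        star (hA.1.eigenvectorUnitary : Matrix (Fin N) (Fin N) ℂ)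
      - (1 / (4 * Real.sqrt κ) : ℝ) • hA.sqrt‖ ≤ 1 / (4*κ) := by
  rw [PosSemidef.sqrt, conj_diagonal_sub_smul, l2_opNorm_unitary_conj hA.1.eigenvectorUnitary.2,
    l2_opNorm_diagonal, pi_norm_le_iff_of_nonneg (by positivity)]
  intro j
  have hev : hA.1.eigenvalues j ≤ 1 :=
    (le_abs_self _).trans ((hA.1.abs_eigenvalues_le_l2_opNorm j).trans hAnorm)
  simpa [← Complex.ofReal_mul, ← Complex.ofReal_sub, Complex.norm_real] using
    abs_mul_filterFun_sq_sub_le (by linarith) (hA.eigenvalues_nonneg j) hev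
end

section
/- Let κ ≥ 1 be a real number, f the filter function associated to κ, and define h : ℝ → ℝ² by h(λ) = (f(λ), √(1 − f(λ)²)) (a unit vector in the Euclidean plane for every λ, since 0 ≤ f(λ) ≤ 1/2). Then h is Lipschitz continuous with Lipschitz constant (π/√3)·κ; that is, ‖h(λ₁) − h(λ₂)‖ ≤ (π/√3)·κ·|λ₁ − λ₂| for all real λ₁, λ₂, where ‖·‖ is the Euclidean norm on ℝ². -/
open Real

/-- The map `λ ↦ (f(λ), √(1 - f(λ)²))` as a curve in the Euclidean plane. -/
noncomputable def hCurve (κ : ℝ) (l : ℝ) : EuclideanSpace ℝ (Fin 2) :=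
  (WithLp.equiv 2 (Fin 2 → ℝ)).symm ![filterFun κ l, Real.sqrt (1 - (filterFun κ l)^2)]

/- ### Auxiliary lemmas -/

lemma sqrtdiff_aux (a b : ℝ) (ha0 : 0 ≤ a) (hb1 : b ≤ 1/2) (h2 : a ≤ b) :
    Real.sqrt 3 * (Real.sqrt (1 - a^2) - Real.sqrt (1 - b^2)) ≤ b - a := by
  set u := Real.sqrt (1 - a^2) with hu
  set v := Real.sqrt (1 - b^2) with hv
  have hb0 : 0 ≤ b := le_trans ha0 h2
  have ha1 : a ≤ 1/2 := le_trans h2 hb1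
  have hu0 : 0 ≤ u := Real.sqrt_nonneg _
  have hv0 : 0 ≤ v := Real.sqrt_nonneg _
  have hu2 : u^2 = 1 - a^2 := Real.sq_sqrt (by nlinarith)
  have hv2 : v^2 = 1 - b^2 := Real.sq_sqrt (by nlinarith)
  have hs0 : 0 ≤ Real.sqrt 3 := Real.sqrt_nonneg _
  have hs2 : (Real.sqrt 3)^2 = 3 := Real.sq_sqrt (by norm_num)
  have huv : v ≤ u := Real.sqrt_le_sqrt (by nlinarith)
  have husq : Real.sqrt 3 / 2 ≤ u := by
    nlinarith [sq_nonneg (u - Real.sqrt 3 / 2), sq_nonneg (u + Real.sqrt 3 / 2)]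
  have hvsq : Real.sqrt 3 / 2 ≤ v := by
    nlinarith [sq_nonneg (v - Real.sqrt 3 / 2), sq_nonneg (v + Real.sqrt 3 / 2)]
  have h₁ : Real.sqrt 3 * (u - v) ≤ (u + v) * (u - v) :=
    mul_le_mul_of_nonneg_right (by linarith) (by linarith)
  have h₂ : (b + a) * (b - a) ≤ 1 * (b - a) :=
    mul_le_mul_of_nonneg_right (by linarith) (by linarith)
  nlinarith [h₁, h₂]

lemma sqrtdiff (a b : ℝ) (ha0 : 0 ≤ a) (ha1 : a ≤ 1/2) (hb0 : 0 ≤ b) (hb1 : b ≤ 1/2) :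
    Real.sqrt 3 * |Real.sqrt (1 - a^2) - Real.sqrt (1 - b^2)| ≤ |a - b| := by
  rcases le_total a b with h | h
  · have huv : Real.sqrt (1 - b^2) ≤ Real.sqrt (1 - a^2) := Real.sqrt_le_sqrt (by nlinarith)
    rw [abs_of_nonneg (by linarith), abs_of_nonpos (by linarith)]
    have := sqrtdiff_aux a b ha0 hb1 h
    linarith
  · have huv : Real.sqrt (1 - a^2) ≤ Real.sqrt (1 - b^2) := Real.sqrt_le_sqrt (by nlinarith)
    rw [abs_of_nonpos (by linarith), abs_of_nonneg (by linarith)]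
    have := sqrtdiff_aux b a hb0 ha1 h
    linarith

lemma glue_lip {f : ℝ → ℝ} {K t : ℝ} {s₁ s₂ s : Set ℝ}
    (hs₁ : s₁ ⊆ Set.Iic t) (hs₂ : s₂ ⊆ Set.Ici t) (ht₁ : t ∈ s₁) (ht₂ : t ∈ s₂)
    (hsub : s ⊆ s₁ ∪ s₂)
    (h1 : ∀ x ∈ s₁, ∀ y ∈ s₁, |f x - f y| ≤ K * |x - y|)
    (h2 : ∀ x ∈ s₂, ∀ y ∈ s₂, |f x - f y| ≤ K * |x - y|) :
    ∀ x ∈ s, ∀ y ∈ s, |f x - f y| ≤ K * |x - y| := by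
  have main : ∀ x ∈ s₁, ∀ y ∈ s₂, |f x - f y| ≤ K * |x - y| := by
    intro x hx y hy
    have hxt : x ≤ t := hs₁ hx
    have hty : t ≤ y := hs₂ hy
    calc |f x - f y| ≤ |f x - f t| + |f t - f y| := abs_sub_le _ _ _
      _ ≤ K * |x - t| + K * |t - y| := add_le_add (h1 x hx t ht₁) (h2 t ht₂ y hy)
      _ = K * |x - y| := by
          rw [abs_of_nonpos (by linarith), abs_of_nonpos (by linarith),
            abs_of_nonpos (by linarith)]; ring
  intro x hx y hy
  rcases hsub hx with hx1 | hx2 <;> rcases hsub hy with hy1 | hy2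
  · exact h1 x hx1 y hy1
  · exact main x hx1 y hy2
  · rw [abs_sub_comm (f x) (f y), abs_sub_comm x y]; exact main y hy1 x hx2
  · exact h2 x hx2 y hy2

lemma sin_piece (c a : ℝ) (hc : 0 ≤ c) (x y : ℝ) :
    |(1/2) * Real.sin (π * c * (x - a)) - (1/2) * Real.sin (π * c * (y - a))|
      ≤ (π * c / 2) * |x - y| := by
  have hder : ∀ z ∈ (Set.univ : Set ℝ),
      HasDerivWithinAt (fun l : ℝ => (1/2) * Real.sin (π * c * (l - a)))
        ((1/2) * (Real.cos (π * c * (z - a)) * (π * c))) Set.univ z := by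
    intro z _
    have h1 : HasDerivAt (fun l : ℝ => π * c * (l - a)) (π * c) z := by
      simpa using (((hasDerivAt_id z).sub_const a).const_mul (π * c))
    exact (HasDerivAt.const_mul (1/2 : ℝ)
      ((Real.hasDerivAt_sin (π * c * (z - a))).comp z h1)).hasDerivWithinAt
  have hbound : ∀ z ∈ (Set.univ : Set ℝ),
      ‖(1/2) * (Real.cos (π * c * (z - a)) * (π * c))‖ ≤ π * c / 2 := by
    intro z _
    rw [Real.norm_eq_abs, abs_mul, abs_mul]
    have h1 : |Real.cos (π * c * (z - a))| ≤ 1 := Real.abs_cos_le_one _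
    have h2 : |π * c| = π * c := abs_of_nonneg (by positivity)
    have h3 : |(1/2 : ℝ)| = 1/2 := by norm_num
    rw [h2, h3]
    nlinarith [mul_le_mul_of_nonneg_right h1 (by positivity : (0:ℝ) ≤ π * c)]
  have := convex_univ.norm_image_sub_le_of_norm_hasDerivWithin_le hder hbound
    (Set.mem_univ y) (Set.mem_univ x)
  simpa [Real.norm_eq_abs] using this

lemma pow_piece (κ : ℝ) (hκ : 1 ≤ κ) :
    ∀ x ∈ Set.Icc (1/κ) 1, ∀ y ∈ Set.Icc (1/κ) 1,
      |(1/2) * κ ^ (-(1/4 : ℝ)) * x ^ (-(1/4 : ℝ))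
        - (1/2) * κ ^ (-(1/4 : ℝ)) * y ^ (-(1/4 : ℝ))| ≤ (π * κ / 2) * |x - y| := by
  have hκ0 : (0:ℝ) < κ := lt_of_lt_of_le one_pos hκ
  have hb0 : (0:ℝ) < 1/κ := by positivity
  have hder : ∀ z ∈ Set.Icc (1/κ) 1,
      HasDerivWithinAt (fun l : ℝ => (1/2) * κ ^ (-(1/4 : ℝ)) * l ^ (-(1/4 : ℝ)))
        ((1/2) * κ ^ (-(1/4 : ℝ)) * ((-(1/4 : ℝ)) * z ^ ((-(1/4 : ℝ)) - 1)))
        (Set.Icc (1/κ) 1) z := by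
    intro z hz
    have hz0 : z ≠ 0 := ne_of_gt (lt_of_lt_of_le hb0 hz.1)
    exact (HasDerivAt.const_mul ((1/2) * κ ^ (-(1/4 : ℝ)))
      (Real.hasDerivAt_rpow_const (p := -(1/4 : ℝ)) (Or.inl hz0))).hasDerivWithinAt
  have hbound : ∀ z ∈ Set.Icc (1/κ) 1,
      ‖(1/2) * κ ^ (-(1/4 : ℝ)) * ((-(1/4 : ℝ)) * z ^ ((-(1/4 : ℝ)) - 1))‖ ≤ π * κ / 2 := by
    intro z hz
    have hz0 : (0:ℝ) < z := lt_of_lt_of_le hb0 hz.1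
    have hzz : z ^ ((-(1/4 : ℝ)) - 1) ≤ κ ^ ((5/4 : ℝ)) := by
      have e1 : ((-(1/4 : ℝ)) - 1) = -(5/4 : ℝ) := by norm_num
      have h1 : z ^ (-(5/4 : ℝ)) ≤ (1/κ) ^ (-(5/4 : ℝ)) :=
        Real.rpow_le_rpow_of_nonpos hb0 hz.1 (by norm_num)
      have h2 : (1/κ) ^ (-(5/4 : ℝ)) = κ ^ ((5/4 : ℝ)) := by
        rw [one_div, Real.rpow_neg (by positivity), Real.inv_rpow hκ0.le, inv_inv]
      rw [e1]; rw [h2] at h1; exact h1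
    rw [Real.norm_eq_abs]
    have hz4 : (0:ℝ) ≤ z ^ ((-(1/4 : ℝ)) - 1) := by positivity
    have habs : |(1/2) * κ ^ (-(1/4 : ℝ)) * ((-(1/4 : ℝ)) * z ^ ((-(1/4 : ℝ)) - 1))|
        = (1/2) * κ ^ (-(1/4 : ℝ)) * ((1/4) * z ^ ((-(1/4 : ℝ)) - 1)) := by
      rw [abs_mul, abs_of_nonneg (by positivity : (0:ℝ) ≤ (1/2) * κ ^ (-(1/4 : ℝ))),
        abs_mul, abs_of_nonneg hz4]
      norm_num
    rw [habs]
    have hk : κ ^ (-(1/4 : ℝ)) * κ ^ ((5/4 : ℝ)) = κ := by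
      rw [← Real.rpow_add hκ0]; norm_num
    have hp : (3:ℝ) ≤ π := by linarith [Real.pi_gt_three]
    have hk4 : (0:ℝ) ≤ κ ^ (-(1/4 : ℝ)) := by positivity
    nlinarith [mul_le_mul_of_nonneg_left hzz hk4]
  intro x hx y hy
  have := (convex_Icc (1/κ) 1).norm_image_sub_le_of_norm_hasDerivWithin_le hder hbound hy hx
  simpa [Real.norm_eq_abs] using this

lemma filterFun_lip (κ : ℝ) (hκ : 1 ≤ κ) (x y : ℝ) :
    |filterFun κ x - filterFun κ y| ≤ (π * κ / 2) * |x - y| := by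
  have hκ0 : (0:ℝ) < κ := lt_of_lt_of_le one_pos hκ
  set a := 1/(2*κ) with ha
  set b := 1/κ with hb
  have ha0 : 0 < a := by positivity
  have hab : a < b := by
    rw [ha, hb, div_lt_div_iff₀ (by positivity) (by positivity)]; nlinarith
  have hb1 : b ≤ 1 := by rw [hb, div_le_one hκ0]; exact hκ
  have ha1 : a < 1 := lt_of_lt_of_le hab hb1
  -- branch equalities
  have f_zero : ∀ l ∈ Set.Iic a, filterFun κ l = 0 := by
    intro l hl
    simp only [Set.mem_Iic] at hl
    simp only [filterFun, ← ha, ← hb]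
    rw [if_neg (by linarith), if_neg (by linarith)]
    rcases eq_or_lt_of_le hl with h | h
    · rw [if_pos (le_of_eq h.symm), h, sub_self, zero_div, mul_zero, Real.sin_zero, mul_zero]
    · rw [if_neg (by linarith)]
  have f_sin : ∀ l ∈ Set.Icc a b,
      filterFun κ l = (1/2) * Real.sin (π * κ * (l - a)) := by
    intro l hl
    obtain ⟨hl1, hl2⟩ := hl
    have hba : b - a = a := by rw [ha, hb]; field_simp; ring
    rcases eq_or_lt_of_le hl2 with h | h
    · -- l = b
      simp only [filterFun, ← ha, ← hb]
      rw [if_neg (by linarith), if_pos (le_of_eq h.symm)]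
      have h1 : l ^ (-(1/4 : ℝ)) = (κ ^ (-(1/4 : ℝ)))⁻¹ := by
        rw [h, hb, one_div, Real.inv_rpow hκ0.le]
      rw [h1, mul_assoc, mul_inv_cancel₀ (by positivity), mul_one]
      have h2 : π * κ * (l - a) = π/2 := by
        rw [h, ha, hb]; field_simp; ring
      rw [h2, Real.sin_pi_div_two, mul_one]
    · simp only [filterFun, ← ha, ← hb]
      rw [if_neg (by linarith), if_neg (by linarith), if_pos hl1]
      have harg : (π/2) * ((l - a) / (b - a)) = π * κ * (l - a) := by
        rw [hba, ha]
        field_simp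
      rw [harg]
  have f_pow : ∀ l ∈ Set.Icc b 1,
      filterFun κ l = (1/2) * κ ^ (-(1/4 : ℝ)) * l ^ (-(1/4 : ℝ)) := by
    intro l hl
    simp only [filterFun, ← ha, ← hb]
    rw [if_neg (by linarith [hl.2]), if_pos hl.1]
  have f_const : ∀ l ∈ Set.Ici (1:ℝ), filterFun κ l = (1/2) * κ ^ (-(1/4 : ℝ)) := by
    intro l hl
    simp only [Set.mem_Ici] at hl
    simp only [filterFun, ← ha, ← hb]
    rcases eq_or_lt_of_le hl with h | h
    · rw [if_neg (by linarith), if_pos (by linarith), ← h, Real.one_rpow, mul_one]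
    · rw [if_pos h]
  have hK0 : 0 ≤ π * κ / 2 := by positivity
  -- Lipschitz on pieces
  have P1 : ∀ x ∈ Set.Iic a, ∀ y ∈ Set.Iic a, |filterFun κ x - filterFun κ y|
      ≤ (π * κ / 2) * |x - y| := by
    intro x hx y hy
    rw [f_zero x hx, f_zero y hy, sub_self, abs_zero]
    positivity
  have P2 : ∀ x ∈ Set.Icc a b, ∀ y ∈ Set.Icc a b, |filterFun κ x - filterFun κ y|
      ≤ (π * κ / 2) * |x - y| := by
    intro x hx y hy
    rw [f_sin x hx, f_sin y hy]
    exact sin_piece κ a hκ0.le x y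
  have P3 : ∀ x ∈ Set.Icc b 1, ∀ y ∈ Set.Icc b 1, |filterFun κ x - filterFun κ y|
      ≤ (π * κ / 2) * |x - y| := by
    intro x hx y hy
    rw [f_pow x hx, f_pow y hy]
    exact pow_piece κ hκ x (by rwa [← hb]) y (by rwa [← hb])
  have P4 : ∀ x ∈ Set.Ici (1:ℝ), ∀ y ∈ Set.Ici (1:ℝ), |filterFun κ x - filterFun κ y|
      ≤ (π * κ / 2) * |x - y| := by
    intro x hx y hy
    rw [f_const x hx, f_const y hy, sub_self, abs_zero]
    positivity
  have P34 : ∀ x ∈ Set.Ici b, ∀ y ∈ Set.Ici b, |filterFun κ x - filterFun κ y|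
      ≤ (π * κ / 2) * |x - y| :=
    glue_lip (s₁ := Set.Icc b 1) (s₂ := Set.Ici 1) (s := Set.Ici b) (t := 1)
      (fun z hz => hz.2) (fun z hz => hz)
      (Set.mem_Icc.mpr ⟨hb1, le_refl 1⟩) (Set.mem_Ici.mpr (le_refl 1))
      (fun z hz => by
        rcases le_total z 1 with h | h
        · exact Or.inl ⟨hz, h⟩
        · exact Or.inr h) P3 P4
  have P234 : ∀ x ∈ Set.Ici a, ∀ y ∈ Set.Ici a, |filterFun κ x - filterFun κ y|
      ≤ (π * κ / 2) * |x - y| :=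
    glue_lip (s₁ := Set.Icc a b) (s₂ := Set.Ici b) (s := Set.Ici a) (t := b)
      (fun z hz => hz.2) (fun z hz => hz)
      (Set.mem_Icc.mpr ⟨hab.le, le_refl b⟩) (Set.mem_Ici.mpr (le_refl b))
      (fun z hz => by
        rcases le_total z b with h | h
        · exact Or.inl ⟨hz, h⟩
        · exact Or.inr h) P2 P34
  have Pall : ∀ x ∈ (Set.univ : Set ℝ), ∀ y ∈ (Set.univ : Set ℝ),
      |filterFun κ x - filterFun κ y| ≤ (π * κ / 2) * |x - y| :=
    glue_lip (s₁ := Set.Iic a) (s₂ := Set.Ici a) (s := Set.univ) (t := a)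
      (fun z hz => hz) (fun z hz => hz)
      (Set.mem_Iic.mpr (le_refl a)) (Set.mem_Ici.mpr (le_refl a))
      (fun z _ => by
        rcases le_total z a with h | h
        · exact Or.inl h
        · exact Or.inr h) P1 P234
  exact Pall x (Set.mem_univ x) y (Set.mem_univ y)

lemma filterFun_mem (κ : ℝ) (hκ : 1 ≤ κ) (l : ℝ) :
    0 ≤ filterFun κ l ∧ filterFun κ l ≤ 1/2 := by
  have hκ0 : (0:ℝ) < κ := lt_of_lt_of_le one_pos hκ
  unfold filterFun
  split_ifs with h1 h2 h3
  · constructor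
    · positivity
    · have : κ ^ (-(1/4 : ℝ)) ≤ 1 := Real.rpow_le_one_of_one_le_of_nonpos hκ (by norm_num)
      nlinarith [Real.rpow_nonneg hκ0.le (-(1/4 : ℝ))]
  · have hl0 : (0:ℝ) < l := lt_of_lt_of_le (by positivity) h2
    constructor
    · positivity
    · have hmul : κ ^ (-(1/4 : ℝ)) * l ^ (-(1/4 : ℝ)) = (κ * l) ^ (-(1/4 : ℝ)) :=
        (Real.mul_rpow hκ0.le hl0.le).symm
      have hkl : 1 ≤ κ * l := by
        have := (div_le_iff₀ hκ0).mp h2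
        nlinarith
      have : (κ * l) ^ (-(1/4 : ℝ)) ≤ 1 :=
        Real.rpow_le_one_of_one_le_of_nonpos hkl (by norm_num)
      rw [mul_assoc, hmul]
      nlinarith [Real.rpow_nonneg (by nlinarith : (0:ℝ) ≤ κ * l) (-(1/4 : ℝ))]
  · have hba : 1/κ - 1/(2*κ) = 1/(2*κ) := by field_simp; ring
    have harg0 : 0 ≤ (π/2) * ((l - 1/(2*κ)) / (1/κ - 1/(2*κ))) := by
      rw [hba]
      have : 0 ≤ l - 1/(2*κ) := by linarith
      positivity
    have hargpi : (π/2) * ((l - 1/(2*κ)) / (1/κ - 1/(2*κ))) ≤ π := by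
      rw [hba]
      have hl : l < 1/κ := lt_of_not_ge h2
      have hr : (l - 1/(2*κ)) / (1/(2*κ)) ≤ 1 := by
        rw [div_le_one (by positivity)]
        have : 1/κ - 1/(2*κ) = 1/(2*κ) := hba
        linarith
      nlinarith [Real.pi_pos, div_nonneg (by linarith : (0:ℝ) ≤ l - 1/(2*κ)) (by positivity : (0:ℝ) ≤ 1/(2*κ))]
    constructor
    · have := Real.sin_nonneg_of_nonneg_of_le_pi harg0 hargpi
      linarith
    · have := Real.sin_le_one ((π/2) * ((l - 1/(2*κ)) / (1/κ - 1/(2*κ))))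
      linarith
  · norm_num

theorem stmt3 (κ : ℝ) (hκ : 1 ≤ κ) (l₁ l₂ : ℝ) :
    ‖hCurve κ l₁ - hCurve κ l₂‖ ≤ (π / Real.sqrt 3) * κ * |l₁ - l₂| := by
  set f₁ := filterFun κ l₁ with hf₁
  set f₂ := filterFun κ l₂ with hf₂
  set X := f₁ - f₂ with hX
  set Y := Real.sqrt (1 - f₁^2) - Real.sqrt (1 - f₂^2) with hY
  have h0 : (hCurve κ l₁ - hCurve κ l₂) 0 = X := rfl
  have h1 : (hCurve κ l₁ - hCurve κ l₂) 1 = Y := rfl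
  have hnorm : ‖hCurve κ l₁ - hCurve κ l₂‖ = Real.sqrt (X^2 + Y^2) := by
    rw [EuclideanSpace.norm_eq, Fin.sum_univ_two, h0, h1, Real.norm_eq_abs,
      Real.norm_eq_abs, sq_abs, sq_abs]
  have hm₁ := filterFun_mem κ hκ l₁
  have hm₂ := filterFun_mem κ hκ l₂
  have hYX : Real.sqrt 3 * |Y| ≤ |X| := sqrtdiff f₁ f₂ hm₁.1 hm₁.2 hm₂.1 hm₂.2
  have hXl : |X| ≤ (π * κ / 2) * |l₁ - l₂| := filterFun_lip κ hκ l₁ l₂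
  have hs0 : (0:ℝ) < Real.sqrt 3 := Real.sqrt_pos.mpr (by norm_num)
  have hs2 : (Real.sqrt 3)^2 = 3 := Real.sq_sqrt (by norm_num)
  rw [hnorm, div_mul_eq_mul_div, div_mul_eq_mul_div, le_div_iff₀ hs0]
  calc Real.sqrt (X^2 + Y^2) * Real.sqrt 3
      = Real.sqrt ((X^2 + Y^2) * 3) := (Real.sqrt_mul (by positivity) 3).symm
    _ ≤ Real.sqrt ((2*|X|)^2) := by
        apply Real.sqrt_le_sqrt
        have h3Y : 3 * Y^2 ≤ X^2 := by
          have hm := mul_self_le_mul_self (mul_nonneg hs0.le (abs_nonneg Y)) hYX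
          nlinarith [sq_abs X, sq_abs Y]
        nlinarith [sq_abs X]
    _ = 2 * |X| := Real.sqrt_sq (by positivity)
    _ ≤ π * κ * |l₁ - l₂| := by linarith
end

section
/- Let T ≥ 8 be an integer and δ a real number with 2π/T < |δ| ≤ 4π/3. Define α = (√2/T)·Σ_{τ=0}^{T−1} e^{iτδ}·sin(π(τ + 1/2)/T). Then |α| ≤ 3√2·π³/(T²·δ²). -/
/-!
Writing `sin` through exponentials splits the sine-windowed sum `S` into two geometric series
with ratios `e^{i(δ ± π/T)}`; since `e^{iπ} = -1` both have the same `T`-th power, and clearing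
denominators gives `S · 2(cos(π/T) - cos δ) = (w^T + 1)(w + 1) w⁻¹ sin(π/2T)` with `w = e^{iδ}`.
Hence `‖S‖ (cos(π/T) - cos δ) ≤ π/T`, and on `2π/T < |δ| ≤ 4π/3` the gap `cos(π/T) - cos δ`
is at least `δ² / (3π²)`.
-/

open Real Complex Finset

-- With `c = e^{iπ/(2N)}` the summand is `-2i w^τ sin((2τ+1)π/(2N))`.
theorem sum_pow_mul_odd_pow_sub_mul_eq {K : Type*} [Field K] {N : ℕ} {c : K} (hc : c ≠ 0)
    (hcN : c ^ (2 * N) = -1) (w : K) (hw : w ≠ 0) :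
    (∑ τ ∈ range N, w ^ τ * (c⁻¹ ^ (2 * τ + 1) - c ^ (2 * τ + 1))) *
        ((w + w⁻¹) - (c ^ 2 + c⁻¹ ^ 2)) =
      -((w ^ N + 1) * (w + 1) * w⁻¹ * (c - c⁻¹)) := by
  have hsum : ∑ τ ∈ range N, w ^ τ * (c⁻¹ ^ (2 * τ + 1) - c ^ (2 * τ + 1)) =
      c⁻¹ * ∑ τ ∈ range N, (w * c⁻¹ ^ 2) ^ τ - c * ∑ τ ∈ range N, (w * c ^ 2) ^ τ := by
    simp only [mul_sum, ← sum_sub_distrib]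
    refine sum_congr rfl fun τ _ => ?_
    ring
  have hA := geom_sum_mul (w * c ^ 2) N
  have hB := geom_sum_mul (w * c⁻¹ ^ 2) N
  rw [mul_pow, ← pow_mul, hcN] at hA
  rw [mul_pow, ← pow_mul, inv_pow c (2 * N), hcN] at hB
  rw [hsum]
  generalize ∑ τ ∈ range N, (w * c ^ 2) ^ τ = GA at hA ⊢
  generalize ∑ τ ∈ range N, (w * c⁻¹ ^ 2) ^ τ = GB at hB ⊢
  field_simp at hA hB ⊢
  linear_combination (c ^ 2 * w - 1) * hB - c ^ 2 * (w - c ^ 2) * hA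

theorem exp_mul_I_pow_add_inv_pow (x : ℝ) (n : ℕ) :
    Complex.exp (x * I) ^ n + (Complex.exp (x * I))⁻¹ ^ n = 2 * Real.cos (n * x) := by
  rw [← Complex.exp_nat_mul, inv_pow, ← Complex.exp_nat_mul, ← Complex.exp_neg,
    show (n : ℂ) * (x * I) = ((n * x : ℝ) : ℂ) * I by push_cast; ring, ← neg_mul,
    Complex.exp_mul_I, Complex.exp_mul_I, Complex.cos_neg, Complex.sin_neg, Complex.ofReal_cos]
  ring

theorem exp_mul_I_pow_sub_inv_pow (x : ℝ) (n : ℕ) :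
    Complex.exp (x * I) ^ n - (Complex.exp (x * I))⁻¹ ^ n = 2 * I * Real.sin (n * x) := by
  rw [← Complex.exp_nat_mul, inv_pow, ← Complex.exp_nat_mul, ← Complex.exp_neg,
    show (n : ℂ) * (x * I) = ((n * x : ℝ) : ℂ) * I by push_cast; ring, ← neg_mul,
    Complex.exp_mul_I, Complex.exp_mul_I, Complex.cos_neg, Complex.sin_neg, Complex.ofReal_sin]
  ring

noncomputable def sineWindowSum (N : ℕ) (θ : ℝ) : ℂ :=
  ∑ τ ∈ range N, Complex.exp (Complex.I * τ * θ) * (Real.sin (π * (τ + 1/2) / N) : ℂ)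

theorem sineWindowSum_mul_cos_sub_cos {N : ℕ} (hN : N ≠ 0) (θ : ℝ) :
    sineWindowSum N θ * (2 * (Real.cos θ - Real.cos (π / N))) =
      (Complex.exp (θ * I) ^ N + 1) * (Complex.exp (θ * I) + 1) * (Complex.exp (θ * I))⁻¹ *
        Real.sin (π / (2 * N)) := by
  set w := Complex.exp (θ * I)
  set c := Complex.exp ((π / (2 * N) : ℝ) * I)
  have hterm (τ : ℕ) : Complex.exp (I * τ * θ) * (Real.sin (π * (τ + 1/2) / N) : ℂ) =
      I / 2 * (w ^ τ * (c⁻¹ ^ (2 * τ + 1) - c ^ (2 * τ + 1))) := by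
    rw [← neg_sub, exp_mul_I_pow_sub_inv_pow, ← Complex.exp_nat_mul,
      show (τ : ℂ) * (θ * I) = I * τ * θ by ring,
      show π * (τ + 1/2) / N = ((2 * τ + 1 : ℕ) : ℝ) * (π / (2 * N)) by push_cast; ring]
    linear_combination (Real.sin (((2 * τ + 1 : ℕ) : ℝ) * (π / (2 * N))) : ℂ) *
      Complex.exp (I * τ * θ) * I_sq
  have hcN : c ^ (2 * N) = -1 := by
    rw [← Complex.exp_nat_mul, ← Complex.exp_pi_mul_I]
    congr 1
    push_cast
    field_simp
  have hcos : 2 * ((Real.cos θ : ℂ) - Real.cos (π / N)) = (w + w⁻¹) - (c ^ 2 + c⁻¹ ^ 2) := by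
    have hw := exp_mul_I_pow_add_inv_pow θ 1
    have hc := exp_mul_I_pow_add_inv_pow (π / (2 * N)) 2
    rw [show ((2 : ℕ) : ℝ) * (π / (2 * N)) = π / N by push_cast; field_simp] at hc
    simp only [pow_one, Nat.cast_one, one_mul] at hw
    rw [hw, hc]
    ring
  have hsin : c - c⁻¹ = 2 * I * Real.sin (π / (2 * N)) := by
    simpa only [pow_one, Nat.cast_one, one_mul] using exp_mul_I_pow_sub_inv_pow (π / (2 * N)) 1
  rw [sineWindowSum, sum_congr rfl fun τ _ => hterm τ, ← mul_sum, hcos, mul_assoc,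
    sum_pow_mul_odd_pow_sub_mul_eq (Complex.exp_ne_zero _) hcN w (Complex.exp_ne_zero _), hsin]
  linear_combination -(w ^ N + 1) * (w + 1) * w⁻¹ * Real.sin (π / (2 * N)) * I_sq

theorem norm_sineWindowSum_mul_abs_cos_sub_cos_le {N : ℕ} (hN : N ≠ 0) (θ : ℝ) :
    ‖sineWindowSum N θ‖ * |Real.cos (π / N) - Real.cos θ| ≤ π / N := by
  have hw : ‖Complex.exp (θ * I)‖ = 1 := Complex.norm_exp_ofReal_mul_I θ
  have hwN : ‖Complex.exp (θ * I) ^ N + 1‖ ≤ 2 := by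
    refine (norm_add_le _ _).trans_eq ?_
    rw [norm_pow, hw, one_pow, norm_one, one_add_one_eq_two]
  have hw1 : ‖Complex.exp (θ * I) + 1‖ ≤ 2 := by
    refine (norm_add_le _ _).trans_eq ?_
    rw [hw, norm_one, one_add_one_eq_two]
  have hsin : |Real.sin (π / (2 * N))| ≤ π / (2 * N) :=
    abs_sin_le_abs.trans (abs_of_nonneg (by positivity)).le
  have h := congrArg norm (sineWindowSum_mul_cos_sub_cos hN θ)
  simp only [norm_mul, norm_inv, hw, inv_one, mul_one, ← Complex.ofReal_sub, Complex.norm_real,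
    Real.norm_eq_abs, Complex.norm_ofNat] at h
  rw [abs_sub_comm]
  calc ‖sineWindowSum N θ‖ * |Real.cos θ - Real.cos (π / N)|
      = ‖Complex.exp (θ * I) ^ N + 1‖ * ‖Complex.exp (θ * I) + 1‖ *
          |Real.sin (π / (2 * N))| / 2 := by
        rw [← h]
        ring
    _ ≤ 2 * 2 * (π / (2 * N)) / 2 := by gcongr
    _ = π / N := by field_simp

theorem sq_le_three_mul_pi_sq_mul_cos_sub_cos {φ d : ℝ} (hφ : 0 ≤ φ) (hφπ : φ ≤ π / 8)
    (hφd : 2 * φ < d) (hd : d ≤ 4 * π / 3) :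
    d ^ 2 ≤ 3 * π ^ 2 * (Real.cos φ - Real.cos d) := by
  have hcosφ := one_sub_sq_div_two_le_cos (x := φ)
  have hπ3 := pi_gt_three
  have hπ4 := pi_lt_d2
  have hπsq : π ^ 2 < 10 := by nlinarith
  have hφsq : φ ^ 2 ≤ (d / 2) ^ 2 := pow_le_pow_left₀ hφ (by linarith) 2
  rcases le_or_gt d π with hdπ | hπd
  · have hcosd := cos_le_one_sub_mul_cos_sq (abs_le.2 ⟨by linarith, hdπ⟩)
    calc d ^ 2 ≤ 6 * d ^ 2 - 3 * π ^ 2 / 2 * (d / 2) ^ 2 := by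
          nlinarith [mul_nonneg (sq_nonneg d) (sub_nonneg.2 hπsq.le)]
      _ ≤ 6 * d ^ 2 - 3 * π ^ 2 / 2 * φ ^ 2 := by gcongr
      _ = 3 * π ^ 2 * ((1 - φ ^ 2 / 2) - (1 - 2 / π ^ 2 * d ^ 2)) := by field_simp; ring
      _ ≤ 3 * π ^ 2 * (Real.cos φ - Real.cos d) := by gcongr
  · have hcosd : Real.cos d ≤ -1 / 2 := by
      have h := cos_le_cos_of_nonneg_of_le_pi (x := d - π) (y := π / 3) (by linarith)
        (by linarith) (by linarith)
      rw [Real.cos_sub_pi, cos_pi_div_three] at h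
      linarith
    have hφsq' : φ ^ 2 ≤ (π / 8) ^ 2 := pow_le_pow_left₀ hφ hφπ 2
    have hdsq : d ^ 2 ≤ (4 * π / 3) ^ 2 := pow_le_pow_left₀ (by linarith) hd 2
    have hgap : 1 ≤ Real.cos φ - Real.cos d := by nlinarith
    calc d ^ 2 ≤ (4 * π / 3) ^ 2 := hdsq
      _ ≤ 3 * π ^ 2 * 1 := by nlinarith [sq_nonneg π]
      _ ≤ 3 * π ^ 2 * (Real.cos φ - Real.cos d) := by gcongr

theorem stmt6 (T : ℕ) (hT : 8 ≤ T) (δ : ℝ)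
    (hδl : 2 * π / T < |δ|) (hδu : |δ| ≤ 4 * π / 3) :
    ‖((Real.sqrt 2 / T : ℂ) * ∑ τ ∈ Finset.range T,
        Complex.exp (Complex.I * τ * δ) * (Real.sin (π * (τ + 1/2) / T) : ℂ))‖
      ≤ 3 * Real.sqrt 2 * π^3 / (T^2 * δ^2) := by
  change ‖(Real.sqrt 2 / T : ℂ) * sineWindowSum T δ‖ ≤ _
  have hT8 : (8 : ℝ) ≤ T := by exact_mod_cast hT
  have hgap : δ ^ 2 ≤ 3 * π ^ 2 * (Real.cos (π / T) - Real.cos δ) := by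
    simpa only [sq_abs, Real.cos_abs] using sq_le_three_mul_pi_sq_mul_cos_sub_cos
      (by positivity) (by gcongr) (by rwa [← mul_div_assoc]) hδu
  have hδ : 0 < δ ^ 2 := by
    have : δ ≠ 0 := abs_pos.1 (lt_trans (by positivity) hδl)
    positivity
  have hsum := norm_sineWindowSum_mul_abs_cos_sub_cos_le (by omega : T ≠ 0) δ
  have hpos : 0 < Real.cos (π / T) - Real.cos δ := by nlinarith
  rw [abs_of_pos hpos] at hsum
  have hbound : ‖sineWindowSum T δ‖ ≤ 3 * π ^ 3 / T / δ ^ 2 := by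
    rw [le_div_iff₀ hδ]
    calc ‖sineWindowSum T δ‖ * δ ^ 2
        ≤ ‖sineWindowSum T δ‖ * (3 * π ^ 2 * (Real.cos (π / T) - Real.cos δ)) := by gcongr
      _ ≤ 3 * π ^ 2 * (π / T) := by nlinarith [norm_nonneg (sineWindowSum T δ), pi_pos]
      _ = 3 * π ^ 3 / T := by ring
  rw [norm_mul, norm_div, Complex.norm_real, Complex.norm_natCast,
    Real.norm_of_nonneg (Real.sqrt_nonneg 2)]
  calc Real.sqrt 2 / T * ‖sineWindowSum T δ‖ ≤ Real.sqrt 2 / T * (3 * π ^ 3 / T / δ ^ 2) := by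
        gcongr
    _ = 3 * Real.sqrt 2 * π ^ 3 / (T ^ 2 * δ ^ 2) := by ring
end

section
/- Let M be an N×N Hermitian complex matrix with tr(M) = 0 and eigenvalues μ₁, …, μ_N, and let P be an N×N orthogonal projection matrix (P = Pᴴ and P² = P). Then the real part of tr(M·P) is at most (1/2)·Σ_{i=1}^{N} |μ_i|. -/
/-! In an eigenbasis `u₁, …, u_N` of `M`, `tr (M P) = ∑ μᵢ qᵢ` with `qᵢ = ⟪uᵢ, P uᵢ⟫`. Since both `P`
and `1 - P` are positive semidefinite, `qᵢ ∈ [0, 1]`, so `μᵢ qᵢ ≤ max μᵢ 0 = (|μᵢ| + μᵢ) / 2`; summing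
and using `∑ μᵢ = tr M = 0` gives the bound. -/

open Matrix
open scoped ComplexOrder

lemma mul_le_half_abs_add {μ q : ℝ} (hq : q ∈ Set.Icc 0 1) : μ * q ≤ (|μ| + μ) / 2 := by
  obtain ⟨hq0, hq1⟩ := hq
  cases abs_cases μ <;> nlinarith

lemma Finset.sum_mul_le_half_sum_abs {ι : Type*} (s : Finset ι) {μ q : ι → ℝ}
    (hμ : ∑ i ∈ s, μ i = 0) (hq : ∀ i ∈ s, q i ∈ Set.Icc 0 1) :
    ∑ i ∈ s, μ i * q i ≤ (1 / 2) * ∑ i ∈ s, |μ i| := calc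
  ∑ i ∈ s, μ i * q i ≤ ∑ i ∈ s, (|μ i| + μ i) / 2 :=
    sum_le_sum fun i hi ↦ mul_le_half_abs_add (hq i hi)
  _ = (1 / 2) * ∑ i ∈ s, |μ i| := by rw [← sum_div, sum_add_distrib, hμ]; ring

variable {n 𝕜 : Type*} [Fintype n] [RCLike 𝕜]

lemma Matrix.IsHermitian.trace_mul_eq_sum_eigenvalues_mul [DecidableEq n] {A : Matrix n n 𝕜}
    (hA : A.IsHermitian) (B : Matrix n n 𝕜) :
    (A * B).trace = ∑ i, (hA.eigenvalues i : 𝕜) *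
      (star (hA.eigenvectorUnitary : Matrix n n 𝕜) * B * hA.eigenvectorUnitary) i i := by
  conv_lhs => rw [hA.spectral_theorem, Unitary.conjStarAlgAut_apply, mul_assoc, trace_mul_cycle,
    trace_mul_comm]
  simp [trace, diagonal_mul]

lemma IsStarProjection.posSemidef {P : Matrix n n 𝕜} (hP : IsStarProjection P) :
    P.PosSemidef := by
  have hPH : Pᴴ = P := hP.isSelfAdjoint
  simpa only [hPH, hP.isIdempotentElem.eq] using posSemidef_conjTranspose_mul_self P

lemma IsStarProjection.re_diag_mem_Icc [DecidableEq n] {P : Matrix n n 𝕜}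
    (hP : IsStarProjection P) (i : n) : RCLike.re (P i i) ∈ Set.Icc 0 1 := by
  have h0 := (RCLike.nonneg_iff.mp (hP.posSemidef.diag_nonneg (i := i))).1
  have h1 := (RCLike.nonneg_iff.mp (hP.one_sub.posSemidef.diag_nonneg (i := i))).1
  simp only [Matrix.sub_apply, one_apply_eq, map_sub, RCLike.one_re, sub_nonneg] at h1
  exact ⟨h0, h1⟩

theorem stmt11 {N : ℕ} (M P : Matrix (Fin N) (Fin N) ℂ)
    (hM : M.IsHermitian) (htr : M.trace = 0)
    (hP : Pᴴ = P) (hP2 : P * P = P) :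
    ((M * P).trace).re ≤ (1/2) * ∑ i, |hM.eigenvalues i| := by
  have hQ : IsStarProjection
      (star (hM.eigenvectorUnitary : Matrix (Fin N) (Fin N) ℂ) * P * hM.eigenvectorUnitary) :=
    (IsStarProjection.mk hP2 hP).map (Unitary.conjStarAlgAut ℂ _ hM.eigenvectorUnitary).symm
  have hμ : ∑ i, hM.eigenvalues i = 0 := (RCLike.ofReal_eq_zero (K := ℂ)).mp <| by
    rw [RCLike.ofReal_sum, ← hM.trace_eq_sum_eigenvalues, htr]
  rw [hM.trace_mul_eq_sum_eigenvalues_mul, Complex.re_sum]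
  simp only [Complex.coe_algebraMap, Complex.re_ofReal_mul]
  exact Finset.univ.sum_mul_le_half_sum_abs hμ fun i _ ↦ hQ.re_diag_mem_Icc i
end
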